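/- Stieltjes' summation formulas: for a strictly double positive moment sequence, Σ_{k=0}^n l_k = Σ_{k=0}^n |P_k(0)|² = Δ_{2,n}/Δ_{0,n} and Σ_{k=0}^{n−1} ω_k = −Q_n(0)/P_n(0) = −Δ_{−1,n}/Δ_{1,n}, where Δ_{2,n} = det(s_{2+i+j})_{0≤i,j≤n−1} (Δ_{2,0} := 1) and Δ_{−1,n} is the Hankel-type determinant of size n+1 with top-left entry 0 and entries s_{i+j−1} for i+j ≥ 1 (Δ_{−1,0} := 0). -/

import Mathlib

open MeasureTheory

noncomputable section

/-- The Hankel determinant `Δ_{0,n} = det (s_{i+j})_{0 ≤ i,j ≤ n}`. -/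
def hankel (s : ℕ → ℝ) (n : ℕ) : ℝ :=
  (Matrix.of fun i j : Fin (n + 1) => s (i.1 + j.1)).det

/-- `Δ_{0,n-1}` with the convention `Δ_{0,-1} = 1`. -/
def hankelPrev (s : ℕ → ℝ) : ℕ → ℝ
  | 0 => 1
  | n + 1 => hankel s n

/-- `Δ_{1,n} = det (s_{1+i+j})_{0 ≤ i,j ≤ n−1}` (with `Δ_{1,0} = 1`). -/
def hankel1 (s : ℕ → ℝ) (n : ℕ) : ℝ :=
  (Matrix.of fun i j : Fin n => s (1 + i.1 + j.1)).det

/-- `Δ_{2,n} = det (s_{2+i+j})_{0 ≤ i,j ≤ n−1}` (with `Δ_{2,0} = 1`). -/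
def hankel2 (s : ℕ → ℝ) (n : ℕ) : ℝ :=
  (Matrix.of fun i j : Fin n => s (2 + i.1 + j.1)).det

/-- `Δ_{−1,n}`: the `(n+1)×(n+1)` Hankel-type determinant with top-left entry `0` and
entries `s_{i+j−1}` for `i+j ≥ 1` (so `Δ_{−1,0} = 0`). -/
def hankelm1 (s : ℕ → ℝ) (n : ℕ) : ℝ :=
  (Matrix.of fun i j : Fin (n + 1) =>
    if i.1 + j.1 = 0 then (0 : ℝ) else s (i.1 + j.1 - 1)).det

/-- `ρ` is a solution of the Hamburger moment problem with data `s`. -/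
def IsMomentSolution (s : ℕ → ℝ) (ρ : Measure ℝ) : Prop :=
  ∀ k : ℕ, Integrable (fun x : ℝ => x ^ k) ρ ∧ (∫ x, x ^ k ∂ρ) = s k

/-- The orthonormal polynomial of the first kind `P_n`, via the determinant formula. -/
def Pn (s : ℕ → ℝ) (n : ℕ) (z : ℝ) : ℝ :=
  (Real.sqrt (hankelPrev s n * hankel s n))⁻¹ *
    (Matrix.of fun i j : Fin (n + 1) =>
      if i.1 < n then s (i.1 + j.1) else z ^ j.1).det

/-- The polynomial of the second kind `Q_n(z) = ∫ (P_n(λ) − P_n(z))/(λ − z) dρ(λ)`. -/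
def Qn (s : ℕ → ℝ) (ρ : Measure ℝ) (n : ℕ) (z : ℝ) : ℝ :=
  ∫ t, (if t = z then deriv (Pn s n) z else (Pn s n t - Pn s n z) / (t - z)) ∂ρ

/-- The mass `ω_k = Q_k(0)/P_k(0) − Q_{k+1}(0)/P_{k+1}(0)`. -/
def omKS (s : ℕ → ℝ) (ρ : Measure ℝ) (k : ℕ) : ℝ :=
  Qn s ρ k 0 / Pn s k 0 - Qn s ρ (k + 1) 0 / Pn s (k + 1) 0

/-!
Expanding the determinant that defines `P_n` along its last row `(1, z, …, zⁿ)` gives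
`P_n(0) = c_n (-1)ⁿ Δ_{1,n}` with `c_n = (Δ_{0,n-1} Δ_{0,n})^{-1/2}`. The divided difference
`(P_n(t) - P_n(0)) / t` is the same expansion with the row `(0, 1, t, …, t^{n-1})`, so integrating it
against `ρ` replaces that row by `(0, s_0, …, s_{n-1})`, and a cyclic shift of the rows turns this
determinant into `(-1)ⁿ Δ_{-1,n}`. The second formula is then a telescoping sum, and the third
the quotient of these two expressions.

The first formula follows by induction from the Desnanot–Jacobi identity
`Δ_{0,n+1} Δ_{2,n} = Δ_{2,n+1} Δ_{0,n} - Δ_{1,n+1}²` for the Hankel matrix of size `n + 2`, whose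
interior has determinant `Δ_{2,n}`. Taking the Schur complement of the interior proves it when
`Δ_{2,n} ≠ 0`, and `Δ_{2,n} > 0` is carried along the induction, since `Δ_{2,n+1} / Δ_{0,n+1}` is
`Δ_{2,n} / Δ_{0,n}` plus a square.
-/

namespace Matrix

variable {m K : Type*} [Fintype m] [DecidableEq m] [Field K]

theorem det_submatrix_fromBlocks_sumMap {o : Type*} (A : Matrix m m K) [Invertible A]
    (B : Matrix m o K) (C : Matrix o m K) (D : Matrix o o K) (k l : o) :
    ((fromBlocks A B C D).submatrix (Sum.map id fun _ : Fin 1 => k)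
      (Sum.map id fun _ : Fin 1 => l)).det = A.det * (D - C * ⅟A * B) k l := by
  have hblocks : (fromBlocks A B C D).submatrix (Sum.map id fun _ : Fin 1 => k)
      (Sum.map id fun _ : Fin 1 => l) =
      fromBlocks A (B.submatrix id fun _ => l) (C.submatrix (fun _ => k) id)
        (D.submatrix (fun _ => k) fun _ => l) := by
    ext (i | i) (j | j) <;> rfl
  have hschur : C.submatrix (fun _ : Fin 1 => k) id * ⅟A * B.submatrix id (fun _ : Fin 1 => l) =
      (C * ⅟A * B).submatrix (fun _ => k) (fun _ => l) := by
    rw [submatrix_mul _ _ _ _ _ Function.bijective_id,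
      submatrix_mul _ _ _ _ _ Function.bijective_id, submatrix_id_id]
  rw [hblocks, det_fromBlocks₁₁, det_unique (n := Fin 1), hschur]
  rfl

theorem desnanot_jacobi (M : Matrix (m ⊕ Fin 2) (m ⊕ Fin 2) K) (hA : M.toBlocks₁₁.det ≠ 0) :
    let minor k l := (M.submatrix (Sum.map id fun _ : Fin 1 => k) (Sum.map id fun _ => l)).det
    M.det * M.toBlocks₁₁.det = minor 0 0 * minor 1 1 - minor 0 1 * minor 1 0 := by
  obtain ⟨A, B, C, D, rfl⟩ : ∃ A B C D, M = fromBlocks A B C D :=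
    ⟨_, _, _, _, (fromBlocks_toBlocks M).symm⟩
  rw [toBlocks_fromBlocks₁₁] at hA ⊢
  have := A.invertibleOfIsUnitDet (isUnit_iff_ne_zero.mpr hA)
  simp only [det_submatrix_fromBlocks_sumMap, det_fromBlocks₁₁, det_fin_two]
  ring

theorem det_submatrix_mul_det_submatrix_swap {n R : Type*} [Fintype n] [DecidableEq n]
    [CommRing R] (e f : m ≃ n) (A : Matrix n n R) :
    (A.submatrix e f).det * (A.submatrix f e).det = A.det ^ 2 := by
  have hsign : ∀ e f : m ≃ n,
      (A.submatrix e f).det = Equiv.Perm.sign (e.symm.trans f) * A.det := by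
    intro e f
    rw [← det_permute', ← det_submatrix_equiv_self e]
    congr 1
    ext i j
    simp
  rw [hsign, hsign, show f.symm.trans e = (e.symm.trans f)⁻¹ by ext; simp [Equiv.Perm.inv_def],
    Equiv.Perm.sign_inv]
  rcases Int.units_eq_one_or (Equiv.Perm.sign (e.symm.trans f)) with h | h <;> simp [h] <;> ring

end Matrix

open Matrix

theorem hankel_succ_mul_hankel2 (s : ℕ → ℝ) (n : ℕ) (h : hankel2 s n ≠ 0) :
    hankel s (n + 1) * hankel2 s n = hankel2 s (n + 1) * hankel s n - hankel1 s (n + 1) ^ 2 := by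
  set N : Matrix (Fin (n + 2)) (Fin (n + 2)) ℝ := of fun i j => s (i + j)
  -- `e` puts the interior at `1, …, n` and the two corners `0, 1` at `n + 1, 0`.
  set e : Fin n ⊕ Fin 2 ≃ Fin (n + 2) := finSumFinEquiv.trans (finRotate (n + 2))
  set g : Fin n ⊕ Fin 1 ≃ Fin (n + 1) := finSumFinEquiv.trans (finRotate (n + 1))
  have he0 : e ∘ Sum.map id (fun _ => 0) = Fin.succ ∘ finSumFinEquiv := by
    ext (i | i) : 1
    · simp [e, Fin.val_add_one, Fin.ext_iff]; omega
    · simp [e, Fin.val_add_one, Fin.ext_iff]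
  have he1 : e ∘ Sum.map id (fun _ => 1) = Fin.castSucc ∘ g := by
    ext (i | i) : 1
    · simp [e, g, Fin.val_add_one, Fin.ext_iff]; split_ifs <;> omega
    · simp [e, g, Fin.val_add_one, Fin.ext_iff]
  have hinterior : (N.submatrix e e).toBlocks₁₁ = of fun i j : Fin n => s (2 + i + j) := by
    ext i j
    simp only [N, e, toBlocks₁₁, of_apply, submatrix_apply, Equiv.trans_apply,
      finSumFinEquiv_apply_left, finRotate_apply, Fin.val_add_one, Fin.ext_iff]
    rw [if_neg (by simp; omega), if_neg (by simp; omega), Fin.val_castAdd, Fin.val_castAdd]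
    ring_nf
  have hsucc : N.submatrix Fin.succ Fin.succ = of fun i j : Fin (n + 1) => s (2 + i + j) := by
    ext i j; simp [N]; ring_nf
  have hcast : N.submatrix Fin.castSucc Fin.castSucc = of fun i j : Fin (n + 1) => s (i + j) := by
    ext i j; simp [N]
  have hmixed : N.submatrix Fin.succ Fin.castSucc = of fun i j : Fin (n + 1) => s (1 + i + j) := by
    ext i j; simp [N]; ring_nf
  have hmixed_symm : N.submatrix Fin.castSucc Fin.succ = N.submatrix Fin.succ Fin.castSucc := by
    ext i j; simp [N]; ring_nf
  have hcondensed := desnanot_jacobi (N.submatrix e e) (by rwa [hinterior])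
  simp only [submatrix_submatrix, he0, he1] at hcondensed
  simp only [← submatrix_submatrix (A := N), det_submatrix_equiv_self, hmixed_symm] at hcondensed
  rwa [det_submatrix_mul_det_submatrix_swap, hsucc, hmixed, hcast, hinterior] at hcondensed

def hankelLastRowDet (s : ℕ → ℝ) (n : ℕ) (r : Fin (n + 1) → ℝ) : ℝ :=
  (of fun i j : Fin (n + 1) => if i.1 < n then s (i.1 + j.1) else r j).det

def hankelCofactor (s : ℕ → ℝ) (n : ℕ) (j : Fin (n + 1)) : ℝ :=
  (-1) ^ (n + j.1) *
    ((of fun i j : Fin (n + 1) => s (i.1 + j.1)).submatrix (Fin.last n).succAbove j.succAbove).det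

theorem hankelLastRowDet_eq_sum (s : ℕ → ℝ) (n : ℕ) (r : Fin (n + 1) → ℝ) :
    hankelLastRowDet s n r = ∑ j, r j * hankelCofactor s n j := by
  rw [hankelLastRowDet, det_succ_row _ (Fin.last n)]
  refine Finset.sum_congr rfl fun j _ => ?_
  have hminor : (of fun i j : Fin (n + 1) => if i.1 < n then s (i.1 + j.1) else r j).submatrix
      (Fin.last n).succAbove j.succAbove =
      (of fun i j : Fin (n + 1) => s (i.1 + j.1)).submatrix (Fin.last n).succAbove j.succAbove := by
    ext k l
    simp
  simp only [hankelCofactor, hminor, of_apply, Fin.val_last, lt_self_iff_false, if_false]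
  ring

theorem hankelCofactor_zero (s : ℕ → ℝ) (n : ℕ) :
    hankelCofactor s n 0 = (-1) ^ n * hankel1 s n := by
  simp only [hankelCofactor, Fin.val_zero, add_zero, Fin.succAbove_zero, hankel1]
  congr 2
  ext k l
  simp only [submatrix_apply, of_apply, Fin.succAbove_last, Fin.val_castSucc, Fin.val_succ]
  ring_nf

theorem hankelLastRowDet_shift (s : ℕ → ℝ) (n : ℕ) :
    hankelLastRowDet s n (fun j => if j.1 = 0 then 0 else s (j.1 - 1)) =
      (-1) ^ n * hankelm1 s n := by
  have hrotate : (of fun i j : Fin (n + 1) => if i.1 < n then s (i.1 + j.1)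
      else if j.1 = 0 then 0 else s (j.1 - 1)) =
      (of fun i j : Fin (n + 1) => if i.1 + j.1 = 0 then (0 : ℝ) else s (i.1 + j.1 - 1)).submatrix
        (finRotate (n + 1)) id := by
    ext i j
    simp only [of_apply, submatrix_apply, id, finRotate_apply, Fin.val_add_one, Fin.ext_iff,
      Fin.val_last]
    split_ifs <;> first | rfl | omega | (congr 1; omega)
  rw [hankelLastRowDet, hrotate, det_permute, sign_finRotate, hankelm1]
  push_cast
  rfl

theorem dslope_sum_mul_pow_zero {n : ℕ} (a : Fin (n + 1) → ℝ) :
    dslope (fun t => ∑ j, a j * t ^ (j : ℕ)) 0 = fun t => ∑ j : Fin n, a j.succ * t ^ (j : ℕ) := by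
  set q : ℝ → ℝ := fun t => ∑ j : Fin n, a j.succ * t ^ (j : ℕ)
  have hsplit : (fun t => ∑ j, a j * t ^ (j : ℕ)) = fun t => a 0 + t * q t := by
    ext t
    simp only [Fin.sum_univ_succ, Fin.val_zero, pow_zero, mul_one, Fin.val_succ, pow_succ, q,
      Finset.mul_sum]
    congr 1
    exact Finset.sum_congr rfl fun j _ => by ring
  ext t
  rw [hsplit]
  rcases eq_or_ne t 0 with rfl | ht
  · have hq : DifferentiableAt ℝ q 0 := by fun_prop
    have hderiv : HasDerivAt (fun t => a 0 + t * q t) (q 0) 0 := by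
      simpa using ((hasDerivAt_id' 0).fun_mul hq.hasDerivAt).const_add (a 0)
    rw [dslope_same, hderiv.deriv]
  · rw [dslope_of_ne _ ht, slope_def_field]
    field_simp
    ring

theorem IsMomentSolution.integral_sum_mul_pow {s : ℕ → ℝ} {ρ : Measure ℝ}
    (hρ : IsMomentSolution s ρ) {ι : Type*} (S : Finset ι) (a : ι → ℝ) (d : ι → ℕ) :
    ∫ t, ∑ j ∈ S, a j * t ^ d j ∂ρ = ∑ j ∈ S, a j * s (d j) := by
  rw [integral_finsetSum _ fun j _ => (hρ (d j)).1.const_mul (a j)]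
  simp only [integral_const_mul, (hρ _).2]

theorem Pn_eq_sum (s : ℕ → ℝ) (n : ℕ) :
    Pn s n = fun z => ∑ j, (Real.sqrt (hankelPrev s n * hankel s n))⁻¹ * hankelCofactor s n j *
      z ^ (j : ℕ) := by
  ext z
  rw [Pn, ← hankelLastRowDet, hankelLastRowDet_eq_sum, Finset.mul_sum]
  exact Finset.sum_congr rfl fun j _ => by ring

theorem Pn_apply_zero (s : ℕ → ℝ) (n : ℕ) :
    Pn s n 0 = (Real.sqrt (hankelPrev s n * hankel s n))⁻¹ * ((-1) ^ n * hankel1 s n) := by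
  simp [Pn_eq_sum, Fin.sum_univ_succ, hankelCofactor_zero]

theorem Qn_eq_integral_dslope (s : ℕ → ℝ) (ρ : Measure ℝ) (n : ℕ) (z : ℝ) :
    Qn s ρ n z = ∫ t, dslope (Pn s n) z t ∂ρ := by
  rw [Qn]
  congr 1
  funext t
  rcases eq_or_ne t z with rfl | ht
  · simp
  · simp [ht, dslope_of_ne, slope_def_field]

theorem Qn_apply_zero {s : ℕ → ℝ} {ρ : Measure ℝ} (hρ : IsMomentSolution s ρ) (n : ℕ) :
    Qn s ρ n 0 = (Real.sqrt (hankelPrev s n * hankel s n))⁻¹ * ((-1) ^ n * hankelm1 s n) := by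
  rw [Qn_eq_integral_dslope, Pn_eq_sum, dslope_sum_mul_pow_zero, hρ.integral_sum_mul_pow,
    ← hankelLastRowDet_shift, hankelLastRowDet_eq_sum, Fin.sum_univ_succ]
  simp only [Fin.val_zero, if_true, zero_mul, zero_add, Fin.val_succ, Nat.succ_ne_zero, if_false,
    Nat.add_sub_cancel, Finset.mul_sum]
  exact Finset.sum_congr rfl fun j _ => by ring

theorem hankelPrev_mul_hankel_pos {s : ℕ → ℝ} (h0 : ∀ n, 0 < hankel s n) (n : ℕ) :
    0 < hankelPrev s n * hankel s n := by
  cases n with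
  | zero => simpa [hankelPrev] using h0 0
  | succ m => exact mul_pos (h0 m) (h0 (m + 1))

theorem Pn_apply_zero_sq (s : ℕ → ℝ) (n : ℕ) (h : 0 ≤ hankelPrev s n * hankel s n) :
    Pn s n 0 ^ 2 = hankel1 s n ^ 2 / (hankelPrev s n * hankel s n) := by
  rw [Pn_apply_zero, mul_pow, mul_pow, inv_pow, Real.sq_sqrt h, ← pow_mul, mul_comm n, pow_mul,
    neg_one_sq, one_pow, one_mul, inv_mul_eq_div]

theorem sum_Pn_apply_zero_sq {s : ℕ → ℝ} (h0 : ∀ n, 0 < hankel s n) (n : ℕ) :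
    ∑ k ∈ Finset.range (n + 1), Pn s k 0 ^ 2 = hankel2 s n / hankel s n := by
  suffices ∀ n, ∑ k ∈ Finset.range (n + 1), Pn s k 0 ^ 2 = hankel2 s n / hankel s n ∧
      0 < hankel2 s n from (this n).1
  intro n
  induction n with
  | zero =>
    rw [Finset.sum_range_one, Pn_apply_zero_sq _ _ (hankelPrev_mul_hankel_pos h0 0).le]
    simp [hankelPrev, hankel1, hankel2]
  | succ m ih =>
    have hsum : ∑ k ∈ Finset.range (m + 2), Pn s k 0 ^ 2 =
        hankel2 s (m + 1) / hankel s (m + 1) := by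
      have hcond := hankel_succ_mul_hankel2 s m ih.2.ne'
      have := (h0 m).ne'
      have := (h0 (m + 1)).ne'
      rw [Finset.sum_range_succ, ih.1, Pn_apply_zero_sq _ _ (hankelPrev_mul_hankel_pos h0 _).le,
        show hankelPrev s (m + 1) = hankel s m from rfl]
      field_simp
      linear_combination hcond
    have hpos : 0 < hankel2 s (m + 1) / hankel s (m + 1) := by
      rw [← hsum, Finset.sum_range_succ, ih.1]
      exact add_pos_of_pos_of_nonneg (div_pos ih.2 (h0 m)) (sq_nonneg _)
    exact ⟨hsum, (div_pos_iff_of_pos_right (h0 _)).1 hpos⟩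

theorem stieltjes_summation_formulas_general (s : ℕ → ℝ) (ρ : Measure ℝ)
    (hρ : IsMomentSolution s ρ)
    (h0 : ∀ n, 0 < hankel s n) :
    ∀ n : ℕ,
      (∑ k ∈ Finset.range (n + 1), (Pn s k 0) ^ 2) = hankel2 s n / hankel s n ∧
      (∑ k ∈ Finset.range n, omKS s ρ k) = -(Qn s ρ n 0) / Pn s n 0 ∧
      -(Qn s ρ n 0) / Pn s n 0 = -(hankelm1 s n) / hankel1 s n := by
  intro n
  have hc : (Real.sqrt (hankelPrev s n * hankel s n))⁻¹ ≠ 0 :=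
    inv_ne_zero (Real.sqrt_pos.2 (hankelPrev_mul_hankel_pos h0 n)).ne'
  have hQ0 : Qn s ρ 0 0 = 0 := by simp [Qn_apply_zero hρ, hankelm1]
  refine ⟨sum_Pn_apply_zero_sq h0 n, ?_, ?_⟩
  · have htelescope := Finset.sum_range_sub' (fun k => Qn s ρ k 0 / Pn s k 0) n
    rw [hQ0, zero_div, zero_sub] at htelescope
    rw [neg_div]
    exact htelescope
  · rw [Qn_apply_zero hρ, Pn_apply_zero, neg_div, neg_div, mul_div_mul_left _ _ hc,
      mul_div_mul_left _ _ (pow_ne_zero _ (neg_ne_zero.2 one_ne_zero))]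

/-- Stieltjes' summation formulas: `Σ_{k=0}^n l_k = Σ_{k=0}^n |P_k(0)|² = Δ_{2,n}/Δ_{0,n}`
and `Σ_{k=0}^{n−1} ω_k = −Q_n(0)/P_n(0) = −Δ_{−1,n}/Δ_{1,n}`. -/
theorem stieltjes_summation_formulas (s : ℕ → ℝ) (ρ : Measure ℝ)
    [IsProbabilityMeasure ρ] (hρ : IsMomentSolution s ρ)
    (h0 : ∀ n, 0 < hankel s n) (h1 : ∀ n, 0 < hankel1 s n) :
    ∀ n : ℕ,
      (∑ k ∈ Finset.range (n + 1), (Pn s k 0) ^ 2) = hankel2 s n / hankel s n ∧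
      (∑ k ∈ Finset.range n, omKS s ρ k) = -(Qn s ρ n 0) / Pn s n 0 ∧
      -(Qn s ρ n 0) / Pn s n 0 = -(hankelm1 s n) / hankel1 s n :=
  stieltjes_summation_formulas_general s ρ hρ h0
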